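/- arXiv:1903.09619 — 2 statements merged into one kernel-verified Lean document; each statement's English description precedes it below -/
import Mathlib

section
/- If m is an even natural number (m ≥ 2), then H(2m) = H(m) + 1. -/
/-- The height function: H(1) = 0 and H(n) = H(φ(n)) + 1 for n ≥ 2. -/
def H : ℕ → ℕ
  | 0 => 0
  | 1 => 0
  | n + 2 => H (Nat.totient (n + 2)) + 1
  decreasing_by exact Nat.totient_lt _ (by omega)

/-- The sum-of-heights function S(n) = ∑_{k=1}^n H(k). -/
def S (n : ℕ) : ℕ := ∑ k ∈ Finset.Icc 1 n, H k

/- For even m, φ(2m) = 2φ(m), so H(2m) = H(2φ(m)) + 1 while H(m) = H(φ(m)) + 1. For m > 2,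
φ(m) is again even and at least 2, so strong induction applies to φ(m); the base case m = 2 is
H(4) = 2 = H(2) + 1. -/

theorem H_eq_H_totient_add_one {n : ℕ} (hn : 2 ≤ n) : H n = H n.totient + 1 := by
  obtain ⟨k, rfl⟩ : ∃ k, n = k + 2 := ⟨n - 2, by omega⟩
  rw [H]

theorem H_two : H 2 = 1 := by
  rw [H_eq_H_totient_add_one le_rfl, Nat.totient_two, H]

theorem two_le_totient {n : ℕ} (hn : 2 < n) : 2 ≤ n.totient := by
  obtain ⟨k, hk⟩ := Nat.totient_even hn
  have hpos : 0 < n.totient := Nat.totient_pos.mpr (by omega)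
  omega

theorem height_two_mul_even (m : ℕ) (hm : 2 ≤ m) (heven : Even m) :
    H (2 * m) = H m + 1 := by
  induction m using Nat.strong_induction_on with
  | _ m ih =>
    rw [H_eq_H_totient_add_one (by omega : 2 ≤ 2 * m), Nat.totient_two_mul_of_even heven,
      H_eq_H_totient_add_one hm]
    obtain rfl | hm3 : m = 2 ∨ 2 < m := by omega
    · rw [Nat.totient_two, mul_one, H_two, H]
    · rw [ih m.totient (Nat.totient_lt m (by omega)) (two_le_totient hm3) (Nat.totient_even hm3)]
end

section
/- For every k ≥ 1, the number 2^k is the smallest even number at height k: H(2^k) = k, and every even natural number n with H(n) = k satisfies n ≥ 2^k. -/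
open Nat

lemma H_zero : H 0 = 0 := by
  rw [H]

lemma H_of_two_le {n : ℕ} (hn : 2 ≤ n) : H n = H (φ n) + 1 := by
  obtain ⟨m, rfl⟩ : ∃ m, n = m + 2 := ⟨n - 2, by omega⟩
  rw [H]

lemma H_two_pow (k : ℕ) : H (2 ^ k) = k := by
  induction k with
  | zero => rw [pow_zero, H]
  | succ k ih =>
    rw [H_of_two_le (Nat.le_self_pow k.succ_ne_zero 2), totient_prime_pow_succ prime_two]
    simp [ih]

lemma totient_mul_two_le_of_even {n : ℕ} (hn : Even n) : φ n * 2 ≤ n := by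
  rcases eq_or_ne n 0 with rfl | hn₀
  · simp
  obtain ⟨k, m, hm, rfl⟩ := exists_eq_two_pow_mul_odd hn₀
  cases k with
  | zero => exact absurd (by simpa using hn) (not_even_iff_odd.mpr hm)
  | succ a =>
    have hcop : Coprime (2 ^ (a + 1)) m := (coprime_two_left.mpr hm).pow_left _
    rw [totient_mul hcop, totient_prime_pow_succ prime_two]
    calc 2 ^ a * (2 - 1) * φ m * 2 = 2 ^ (a + 1) * φ m := by ring
      _ ≤ 2 ^ (a + 1) * m := Nat.mul_le_mul_left _ (totient_le m)

lemma two_pow_H_le_of_even {n : ℕ} (hn₀ : n ≠ 0) (hn : Even n) : 2 ^ H n ≤ n := by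
  induction n using Nat.strong_induction_on with
  | _ n ih =>
    have hn₂ : 2 ≤ n := by
      obtain ⟨r, rfl⟩ := hn
      omega
    rcases hn₂.eq_or_lt with rfl | hn₂
    · simp [H_of_two_le le_rfl, H]
    have hφ : 2 ^ H (φ n) ≤ φ n :=
      ih _ (totient_lt n (by omega)) (totient_pos.mpr (by omega)).ne' (totient_even hn₂)
    calc 2 ^ H n = 2 ^ H (φ n) * 2 := by rw [H_of_two_le hn₂.le, pow_succ]
      _ ≤ φ n * 2 := Nat.mul_le_mul_right 2 hφ
      _ ≤ n := totient_mul_two_le_of_even hn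

theorem smallest_even_at_height (k : ℕ) (hk : 1 ≤ k) :
    H (2 ^ k) = k ∧ ∀ n : ℕ, Even n → H n = k → 2 ^ k ≤ n := by
  refine ⟨H_two_pow k, fun n hn hHn => ?_⟩
  have hn₀ : n ≠ 0 := by
    rintro rfl
    rw [H_zero] at hHn
    omega
  exact hHn ▸ two_pow_H_le_of_even hn₀ hn
end
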